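/- arXiv:1805.10151 — 5 statements merged into one kernel-verified Lean document; each statement's English description precedes it below -/
import Mathlib

section
/- If z ∈ K and z ≠ 0, then the nearest Gaussian integer [1/z] has absolute value at least √2; in particular [1/z] ∉ {0, 1, -1, i, -i}. -/
/-!
Write `w = 1/z`. For a unit `u ∈ {1, -1, i, -i}` the condition `Re (u z) ≤ 1/2`, which is part of
`z ∈ K`, says exactly that `|z| ≤ |1 - u z|`, i.e. `|w - u| ≥ 1`; and `|z| ≤ 1` gives `|w| ≥ 1`.
So `w` has distance at least `1` from each of `0, ±1, ±i`, whereas `|w - [w]| ≤ 1/√2 < 1`.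
Hence `[w]` is a Gaussian integer other than `0, ±1, ±i`, so `|[w]|² ≥ 2`.
-/

open Complex Set

/-- The fundamental domain K = {x + yi : x, y ∈ [-1/2, 1/2)}. -/
def K : Set ℂ := {z : ℂ | z.re ∈ Set.Ico (-(1:ℝ)/2) (1/2) ∧ z.im ∈ Set.Ico (-(1:ℝ)/2) (1/2)}

/-- The nearest integer to a real number t: the unique n with t - n ∈ [-1/2, 1/2). -/
noncomputable def nint (t : ℝ) : ℤ := ⌊t + 1/2⌋

/-- The nearest Gaussian integer to a complex number, as a complex number. -/
noncomputable def gnint (w : ℂ) : ℂ := (nint w.re : ℂ) + (nint w.im : ℂ) * I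

lemma nint_eq_round (t : ℝ) : nint t = round t := (round_eq t).symm

lemma abs_sub_nint_le (t : ℝ) : |t - nint t| ≤ 1 / 2 := by
  rw [nint_eq_round]
  exact abs_sub_round t

lemma norm_sub_gnint_lt_one (w : ℂ) : ‖w - gnint w‖ < 1 := by
  have hre := abs_sub_nint_le w.re
  have him := abs_sub_nint_le w.im
  have hsq : ‖w - gnint w‖ ^ 2 ≤ 1 / 2 := by
    rw [Complex.sq_norm, Complex.normSq_apply]
    simp only [gnint, sub_re, sub_im, add_re, add_im, mul_re, mul_im, intCast_re, intCast_im,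
      I_re, I_im, mul_zero, mul_one, sub_zero, zero_add, add_zero]
    nlinarith [abs_le.mp hre, abs_le.mp him]
  nlinarith [norm_nonneg (w - gnint w)]

lemma norm_le_norm_one_sub {v : ℂ} (hv : v.re ≤ 1 / 2) : ‖v‖ ≤ ‖1 - v‖ := by
  rw [← sq_le_sq₀ (norm_nonneg _) (norm_nonneg _), Complex.sq_norm, Complex.sq_norm,
    Complex.normSq_apply, Complex.normSq_apply]
  simp only [sub_re, sub_im, one_re, one_im]
  nlinarith

lemma one_le_norm_inv_sub {z u : ℂ} (hz : z ≠ 0) (hu : ‖u‖ = 1) (h : (u * z).re ≤ 1 / 2) :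
    1 ≤ ‖z⁻¹ - u‖ := by
  have hzpos : 0 < ‖z‖ := norm_pos_iff.mpr hz
  have hfactor : z⁻¹ - u = (1 - u * z) * z⁻¹ := by field_simp
  have hle : ‖u * z‖ ≤ ‖1 - u * z‖ := norm_le_norm_one_sub h
  rw [hfactor, norm_mul, norm_inv, le_mul_inv_iff₀ hzpos, one_mul]
  rwa [norm_mul, hu, one_mul] at hle

lemma norm_le_one_of_mem_K {z : ℂ} (hz : z ∈ K) : ‖z‖ ≤ 1 := by
  obtain ⟨⟨hre₁, hre₂⟩, him₁, him₂⟩ := hz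
  have hre : |z.re| ≤ 1 / 2 := abs_le.mpr ⟨by linarith, hre₂.le⟩
  have him : |z.im| ≤ 1 / 2 := abs_le.mpr ⟨by linarith, him₂.le⟩
  linarith [Complex.norm_le_abs_re_add_abs_im z]

lemma one_le_norm_inv_sub_of_mem_K {z u : ℂ} (hz : z ∈ K) (hz0 : z ≠ 0)
    (hu : u ∈ ({0, 1, -1, I, -I} : Set ℂ)) : 1 ≤ ‖z⁻¹ - u‖ := by
  have ⟨⟨hre₁, hre₂⟩, him₁, him₂⟩ := hz
  rcases hu with rfl | rfl | rfl | rfl | rfl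
  · rw [sub_zero, norm_inv]
    exact one_le_inv₀ (norm_pos_iff.mpr hz0) |>.mpr (norm_le_one_of_mem_K hz)
  all_goals
    refine one_le_norm_inv_sub hz0 (by simp) ?_
    simp only [mul_re, neg_re, neg_im, one_re, one_im, I_re, I_im]
    linarith

lemma two_le_sq_add_sq_of_not_mem {m n : ℤ}
    (h : (m + n * I : ℂ) ∉ ({0, 1, -1, I, -I} : Set ℂ)) : 2 ≤ m ^ 2 + n ^ 2 := by
  by_contra! hlt
  have hm : -1 ≤ m ∧ m ≤ 1 := by constructor <;> nlinarith [sq_nonneg n]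
  have hn : -1 ≤ n ∧ n ≤ 1 := by constructor <;> nlinarith [sq_nonneg m]
  obtain ⟨hm₁, hm₂⟩ := hm
  obtain ⟨hn₁, hn₂⟩ := hn
  interval_cases m <;> interval_cases n <;> simp at h hlt

lemma sqrt_two_le_norm_of_not_mem {m n : ℤ}
    (h : (m + n * I : ℂ) ∉ ({0, 1, -1, I, -I} : Set ℂ)) : √2 ≤ ‖(m + n * I : ℂ)‖ := by
  rw [Real.sqrt_le_iff, Complex.sq_norm, Complex.normSq_apply]
  refine ⟨norm_nonneg _, ?_⟩
  simp only [add_re, add_im, mul_re, mul_im, intCast_re, intCast_im, I_re, I_im, mul_zero,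
    mul_one, sub_zero, zero_add, add_zero]
  have h2 : (2 : ℤ) ≤ m * m + n * n := by simpa only [sq] using two_le_sq_add_sq_of_not_mem h
  exact_mod_cast h2

/-- If z ∈ K is nonzero, the nearest Gaussian integer to 1/z has absolute value at least √2;
in particular it is none of 0, 1, -1, i, -i. -/
theorem first_digit_abs_ge_sqrt_two {z : ℂ} (hz : z ∈ K) (hz0 : z ≠ 0) :
    Real.sqrt 2 ≤ ‖gnint (1 / z)‖ ∧
    gnint (1 / z) ∉ ({0, 1, -1, I, -I} : Set ℂ) := by
  have hnot : gnint (1 / z) ∉ ({0, 1, -1, I, -I} : Set ℂ) := fun hmem => by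
    have hfar := one_le_norm_inv_sub_of_mem_K hz hz0 hmem
    rw [← one_div] at hfar
    exact (norm_sub_gnint_lt_one (1 / z)).not_ge hfar
  exact ⟨sqrt_two_le_norm_of_not_mem hnot, hnot⟩
end

section
/- If z ∈ K is a Gaussian rational, then the Hurwitz continued fraction digit sequence of z terminates after finitely many steps. -/
open Complex Set

/-- The Hurwitz complex continued fraction Gauss map. -/
noncomputable def hurwitzT (z : ℂ) : ℂ := if z = 0 then 0 else 1 / z - gnint (1 / z)

/-! Writing `z = α / β` with Gaussian integers, one step of the Gauss map gives
`T z = (β - a α) / α` with `a` a Gaussian integer, and `T z ∈ K` forces `|β - a α| < |α|`.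
So the integer norm of the numerator strictly decreases and must reach `0`, as in the
Euclidean algorithm. -/

open GaussianInt

lemma sub_nint_mem_Ico (t : ℝ) : t - nint t ∈ Ico (-(1:ℝ)/2) (1/2) := by
  have h₁ := Int.floor_le (t + 1/2)
  have h₂ := Int.lt_floor_add_one (t + 1/2)
  constructor <;> simp only [nint] <;> linarith

lemma sub_gnint_mem_K (w : ℂ) : w - gnint w ∈ K := by
  have hre : (w - gnint w).re = w.re - nint w.re := by simp [gnint]
  have him : (w - gnint w).im = w.im - nint w.im := by simp [gnint]
  exact ⟨hre ▸ sub_nint_mem_Ico w.re, him ▸ sub_nint_mem_Ico w.im⟩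

lemma hurwitzT_mem_K (z : ℂ) : hurwitzT z ∈ K := by
  unfold hurwitzT
  split_ifs
  · exact ⟨⟨by norm_num, by norm_num⟩, ⟨by norm_num, by norm_num⟩⟩
  · exact sub_gnint_mem_K _

lemma normSq_lt_one_of_mem_K {z : ℂ} (hz : z ∈ K) : normSq z < 1 := by
  obtain ⟨⟨h₁, h₂⟩, ⟨h₃, h₄⟩⟩ := hz
  rw [normSq_apply]
  nlinarith

lemma exists_gnint_eq_gaussianInt (w : ℂ) : ∃ a : GaussianInt, gnint w = a :=
  ⟨⟨nint w.re, nint w.im⟩, by rw [gnint, toComplex_def']⟩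

lemma exists_hurwitzT_div_eq_div_norm_lt {α β : GaussianInt} (hz : (α : ℂ) / β ≠ 0) :
    ∃ γ : GaussianInt, hurwitzT (α / β) = γ / α ∧ γ.norm < α.norm := by
  have hα : (α : ℂ) ≠ 0 := left_ne_zero_of_mul hz
  obtain ⟨a, ha⟩ := exists_gnint_eq_gaussianInt ((α : ℂ) / β)⁻¹
  have hT : hurwitzT (α / β) = ((β - a * α : GaussianInt) : ℂ) / α := by
    rw [hurwitzT, if_neg hz, one_div, ha, inv_div, map_sub, map_mul]
    field_simp
  refine ⟨β - a * α, hT, ?_⟩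
  have hK := normSq_lt_one_of_mem_K (hurwitzT_mem_K ((α : ℂ) / β))
  rw [hT, normSq_div, div_lt_one (normSq_pos.mpr hα), ← intCast_real_norm,
    ← intCast_real_norm] at hK
  exact_mod_cast hK

lemma exists_hurwitzT_iterate_div_eq_zero (α β : GaussianInt) :
    ∃ n : ℕ, hurwitzT^[n] (α / β) = 0 := by
  induction hN : α.norm.natAbs using Nat.strong_induction_on generalizing α β with
  | _ N ih =>
    by_cases hz : (α : ℂ) / β = 0
    · exact ⟨0, hz⟩
    obtain ⟨γ, hT, hlt⟩ := exists_hurwitzT_div_eq_div_norm_lt hz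
    obtain ⟨n, hn⟩ := ih γ.norm.natAbs
      (hN ▸ Int.natAbs_lt_natAbs_of_nonneg_of_lt (norm_nonneg γ) hlt) γ α rfl
    exact ⟨n + 1, by rw [Function.iterate_succ_apply, hT, hn]⟩

lemma exists_gaussianInt_div_eq (a b : ℚ) :
    ∃ α β : GaussianInt, (a : ℂ) + (b : ℂ) * I = α / β := by
  refine ⟨⟨a.num * b.den, b.num * a.den⟩, ⟨a.den * b.den, 0⟩, ?_⟩
  have ha : (a.den : ℂ) ≠ 0 := by exact_mod_cast a.den_nz
  have hb : (b.den : ℂ) ≠ 0 := by exact_mod_cast b.den_nz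
  rw [toComplex_def', toComplex_def', Rat.cast_def, Rat.cast_def]
  push_cast
  field_simp
  ring

theorem gaussian_rational_imp_terminates_general {z : ℂ}
    (hrat : ∃ a b : ℚ, z = (a : ℂ) + (b : ℂ) * I) :
    ∃ n : ℕ, hurwitzT^[n] z = 0 := by
  obtain ⟨a, b, rfl⟩ := hrat
  obtain ⟨α, β, hαβ⟩ := exists_gaussianInt_div_eq a b
  rw [hαβ]
  exact exists_hurwitzT_iterate_div_eq_zero α β

/-- If z ∈ K is a Gaussian rational, then its Hurwitz continued fraction
expansion terminates: some remainder zₙ = Tⁿ z equals 0. -/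
theorem gaussian_rational_imp_terminates {z : ℂ} (hz : z ∈ K)
    (hrat : ∃ a b : ℚ, z = (a : ℂ) + (b : ℂ) * I) :
    ∃ n : ℕ, hurwitzT^[n] z = 0 :=
  gaussian_rational_imp_terminates_general hrat
end

section
/- For any measurable E contained in a set where the first Hurwitz digit a of the first coordinate is constant, the measure with density 1/|zw+1|^4 is preserved under the map (z,w) ↦ (1/z - a, 1/(a+w)); equivalently, the integrand identity |((1/z - a)·(1/(a+w)) + 1)|^4 · |z|^4 · |a+w|^4 = |zw+1|^4 holds for all z ≠ 0, w ≠ -a. -/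
open Complex

theorem one_div_sub_mul_one_div_add_one_mul_mul {K : Type*} [Field K] {z w a : K}
    (hz : z ≠ 0) (haw : a + w ≠ 0) :
    ((1 / z - a) * (1 / (a + w)) + 1) * z * (a + w) = z * w + 1 := by
  field_simp
  ring

theorem norm_one_div_sub_mul_one_div_add_one_pow_mul {K : Type*} [NormedField K] {z w a : K}
    (hz : z ≠ 0) (haw : a + w ≠ 0) (n : ℕ) :
    ‖(1 / z - a) * (1 / (a + w)) + 1‖ ^ n * ‖z‖ ^ n * ‖a + w‖ ^ n = ‖z * w + 1‖ ^ n := by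
  rw [← mul_pow, ← mul_pow, ← norm_mul, ← norm_mul, one_div_sub_mul_one_div_add_one_mul_mul hz haw]

/-- The integrand identity showing that the measure with density 1/|zw+1|⁴ is
preserved under (z, w) ↦ (1/z - a, 1/(a+w)):
|(1/z - a)·(1/(a+w)) + 1|⁴ · |z|⁴ · |a+w|⁴ = |zw + 1|⁴ for z ≠ 0, w ≠ -a. -/
theorem density_invariance_identity (z w : ℂ) (a : GaussianInt)
    (hz : z ≠ 0) (hw : w ≠ -(a : ℂ)) :
    ‖(1 / z - (a : ℂ)) * (1 / ((a : ℂ) + w)) + 1‖ ^ 4 *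
        ‖z‖ ^ 4 * ‖(a : ℂ) + w‖ ^ 4 =
      ‖z * w + 1‖ ^ 4 :=
  norm_one_div_sub_mul_one_div_add_one_pow_mul hz (mt add_eq_zero_iff_eq_neg'.mp hw) 4
end

section
/- The open set K₁,₁ = {z ∈ K° : |z + 1 + i| < 1}, together with its rotations by powers of i and the corresponding sets K₂,ℓ and K₃,ℓ, cover K up to a Lebesgue-null set; that is, the complement in K of the union of the twelve open regions K_{k,ℓ} has two-dimensional Lebesgue measure zero. -/
open Complex Set MeasureTheory

/-- The three base regions of analyticity. -/
def Kbase : Fin 3 → Set ℂ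
  | 0 => {z ∈ K | ‖z + 1 + I‖ < 1}
  | 1 => {z ∈ K | 1 < ‖z + 1 + I‖ ∧ ‖z + 1‖ < 1 ∧
            ‖z + I‖ < 1}
  | 2 => {z ∈ K | ‖z + 1‖ < 1 ∧ 1 < ‖z + I‖ ∧
            1 < ‖z - I‖}

/-- The twelve regions K_{k,ℓ} = i^{ℓ-1} · (base region k). -/
noncomputable def Kreg (k : Fin 3) (l : Fin 4) : Set ℂ :=
  (fun z : ℂ => I ^ (l : ℕ) * z) '' Kbase k

lemma ae_re_ne (a : ℝ) : ∀ᵐ z : ℂ, z.re ≠ a :=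
  ((Measure.quasiMeasurePreserving_fst (μ := volume) (ν := volume)).comp
    volume_preserving_equiv_real_prod.quasiMeasurePreserving).ae (volume.ae_ne a)

lemma ae_im_ne (a : ℝ) : ∀ᵐ z : ℂ, z.im ≠ a :=
  ((Measure.quasiMeasurePreserving_snd (μ := volume) (ν := volume)).comp
    volume_preserving_equiv_real_prod.quasiMeasurePreserving).ae (volume.ae_ne a)

lemma ae_norm_sub_ne (c : ℂ) (r : ℝ) : ∀ᵐ z : ℂ, ‖z - c‖ ≠ r := by
  simpa [dist_eq] using measure_eq_zero_iff_ae_notMem.1 (Measure.addHaar_sphere volume c r)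

lemma ae_forall_norm_sub_gaussian_ne_one : ∀ᵐ z : ℂ, ∀ m n : ℤ, ‖z - (m + n * I)‖ ≠ 1 := by
  simp only [ae_all_iff]
  exact fun m n => ae_norm_sub_ne _ _

lemma norm_I_mul_sub_gaussian_ne_one {z : ℂ} (hz : ∀ m n : ℤ, ‖z - (m + n * I)‖ ≠ 1) (m n : ℤ) :
    ‖I * z - (m + n * I)‖ ≠ 1 := by
  have : I * z - (m + n * I) = I * (z - ((n : ℤ) + ((-m : ℤ) : ℂ) * I)) := by
    push_cast
    linear_combination (-(m : ℂ)) * I_sq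
  rw [this, norm_mul, norm_I, one_mul]
  exact hz n (-m)

lemma exists_I_pow_mul_re_nonpos_im_nonpos (z : ℂ) :
    ∃ n : ℕ, (I ^ n * z).re ≤ 0 ∧ (I ^ n * z).im ≤ 0 := by
  rcases le_total z.re 0 with hre | hre <;> rcases le_total z.im 0 with him | him
  · exact ⟨0, by simpa using ⟨hre, him⟩⟩
  · exact ⟨1, by simpa using ⟨him, hre⟩⟩
  · exact ⟨3, by simpa [pow_succ, I_sq] using ⟨him, hre⟩⟩
  · exact ⟨2, by simpa [I_sq] using ⟨hre, him⟩⟩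

lemma norm_add_one_le_one_or_norm_add_I_le_one {z : ℂ} (hre : -1 ≤ z.re) (hre' : z.re ≤ 0)
    (him : -1 ≤ z.im) (him' : z.im ≤ 0) : ‖z + 1‖ ≤ 1 ∨ ‖z + I‖ ≤ 1 := by
  simp only [← sq_le_one_iff₀ (norm_nonneg _), Complex.sq_norm, normSq_apply, add_re, add_im,
    one_re, one_im, I_re, I_im]
  rcases le_total z.re z.im with h | h
  · left; nlinarith
  · right; nlinarith

lemma I_mul_mem_Kreg {z : ℂ} {k : Fin 3} {l : Fin 4} (hz : z ∈ Kreg k l) :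
    I * z ∈ Kreg k (l + 1) := by
  obtain ⟨w, hw, rfl⟩ := hz
  refine ⟨w, hw, ?_⟩
  show I ^ ((l + 1 : Fin 4) : ℕ) * w = I * (I ^ (l : ℕ) * w)
  rw [Fin.val_add, Fin.val_one, ← pow_eq_pow_mod _ I_pow_four, pow_succ', mul_assoc]

lemma mem_iUnion_Kreg_of_re_nonpos_of_im_nonpos {z : ℂ} (hre : -1/2 < z.re) (hre' : z.re ≤ 0)
    (him : -1/2 < z.im) (him' : z.im ≤ 0) (hz : ∀ m n : ℤ, ‖z - (m + n * I)‖ ≠ 1) :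
    z ∈ ⋃ (k : Fin 3) (l : Fin 4), Kreg k l := by
  have hK : z ∈ K := ⟨⟨hre.le, by linarith⟩, him.le, by linarith⟩
  have h₁₁ : ‖z + 1 + I‖ ≠ 1 := by
    convert hz (-1) (-1) using 2
    push_cast
    ring
  have h₁ : ‖z + 1‖ ≠ 1 := by simpa using hz (-1) 0
  have h_I : ‖z + I‖ ≠ 1 := by simpa using hz 0 (-1)
  have h_sub_one : 1 < ‖z - 1‖ := by
    refine lt_of_le_of_ne ?_ (by simpa using (hz 1 0).symm)
    exact (le_abs.2 <| Or.inr <| by rw [sub_re, one_re]; linarith).trans (abs_re_le_norm _)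
  have h_sub_I : 1 < ‖z - I‖ := by
    refine lt_of_le_of_ne ?_ (by simpa using (hz 0 1).symm)
    exact (le_abs.2 <| Or.inr <| by rw [sub_im, I_im]; linarith).trans (abs_im_le_norm _)
  refine mem_iUnion₂.2 ?_
  rcases h₁₁.lt_or_gt with h₁₁ | h₁₁
  · exact ⟨0, 0, z, ⟨hK, h₁₁⟩, by simp⟩
  rcases h₁.lt_or_gt with h₁ | h₁ <;> rcases h_I.lt_or_gt with h_I | h_I
  · exact ⟨1, 0, z, ⟨hK, h₁₁, h₁, h_I⟩, by simp⟩
  · exact ⟨2, 0, z, ⟨hK, h₁, h_I, h_sub_I⟩, by simp⟩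
  · have hrot (c : ℂ) : ‖-I * z + c‖ = ‖z + I * c‖ := by
      rw [show -I * z + c = -I * (z + I * c) by linear_combination c * I_sq, norm_mul, norm_neg,
        norm_I, one_mul]
    have hK_rot : -I * z ∈ K := by
      refine ⟨⟨?_, ?_⟩, ?_, ?_⟩ <;>
        simp only [neg_mul, neg_re, neg_im, I_mul_re, I_mul_im, neg_neg] <;> linarith
    refine ⟨2, 1, -I * z, ⟨hK_rot, ?_, ?_, ?_⟩, ?_⟩
    · rwa [hrot, mul_one]
    · rwa [hrot, I_mul_I, ← sub_eq_add_neg]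
    · rwa [sub_eq_add_neg, hrot, mul_neg, I_mul_I, neg_neg]
    · simp [← mul_assoc]
  · exact ((norm_add_one_le_one_or_norm_add_I_le_one (by linarith) hre' (by linarith) him').elim
      h₁.not_ge h_I.not_ge).elim

lemma mem_iUnion_Kreg_of_abs_lt {z : ℂ} (hre : |z.re| < 1/2) (him : |z.im| < 1/2)
    (hz : ∀ m n : ℤ, ‖z - (m + n * I)‖ ≠ 1) : z ∈ ⋃ (k : Fin 3) (l : Fin 4), Kreg k l := by
  let S := {w : ℂ | |w.re| < 1/2 ∧ |w.im| < 1/2 ∧ ∀ m n : ℤ, ‖w - (m + n * I)‖ ≠ 1}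
  have hS : MapsTo (I * ·) S S := fun w ⟨hre, him, hw⟩ =>
    ⟨by simpa using him, by simpa using hre, norm_I_mul_sub_gaussian_ne_one hw⟩
  have hU : MapsTo (I * ·) (⋃ (k : Fin 3) (l : Fin 4), Kreg k l)
      (⋃ (k : Fin 3) (l : Fin 4), Kreg k l) := fun w hw =>
    let ⟨k, l, hw⟩ := mem_iUnion₂.1 hw
    mem_iUnion₂.2 ⟨k, l + 1, I_mul_mem_Kreg hw⟩
  obtain ⟨n, hre', him'⟩ := exists_I_pow_mul_re_nonpos_im_nonpos z
  obtain ⟨hre_n, him_n, hz_n⟩ : I ^ n * z ∈ S := by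
    simpa [mul_left_iterate] using hS.iterate n ⟨hre, him, hz⟩
  have hw := mem_iUnion_Kreg_of_re_nonpos_of_im_nonpos (by linarith [neg_abs_le (I ^ n * z).re])
    hre' (by linarith [neg_abs_le (I ^ n * z).im]) him' hz_n
  have hz_eq : I ^ (3 * n) * (I ^ n * z) = z := by
    rw [← mul_assoc, ← pow_add, show 3 * n + n = 4 * n by ring, pow_mul, I_pow_four, one_pow,
      one_mul]
  simpa [mul_left_iterate, hz_eq] using hU.iterate (3 * n) hw

/-- The twelve open regions K_{k,ℓ} cover K up to a Lebesgue-null set. -/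
theorem Kreg_cover_ae : volume (K \ ⋃ (k : Fin 3) (l : Fin 4), Kreg k l) = 0 := by
  rw [measure_eq_zero_iff_ae_notMem]
  filter_upwards [ae_re_ne (-1/2), ae_im_ne (-1/2), ae_forall_norm_sub_gaussian_ne_one]
    with z hre him hz
  rintro ⟨⟨⟨hre₁, hre₂⟩, him₁, him₂⟩, hU⟩
  refine hU (mem_iUnion_Kreg_of_abs_lt (abs_lt.2 ⟨?_, hre₂⟩) (abs_lt.2 ⟨?_, him₂⟩) hz)
  · linarith [lt_of_le_of_ne hre₁ hre.symm]
  · linarith [lt_of_le_of_ne him₁ him.symm]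
end

section
/- If z ∈ K satisfies [1/z] = 2 (i.e., the first Hurwitz digit is 2), then T(z) = 1/z - 2 does not satisfy |T(z) + 1| < 1; equivalently, Re(1/T(z)) ≥ -1/2 whenever T(z) ≠ 0. -/
open Complex Set

/-! With digit 2 we have `T z + 1 = 1/z - 1 = (1 - z)/z`, and `Re z < 1/2` says that `z` is
closer to `0` than to `1`, so `‖T z + 1‖ > 1`. For `w ≠ 0`, expanding `‖w + 1‖² ≥ 1` gives
`‖w‖² + 2 Re w ≥ 0`, i.e. `Re (1/w) = Re w / ‖w‖² ≥ -1/2`. -/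

theorem Complex.norm_le_norm_one_sub_of_re_le_half {z : ℂ} (h : z.re ≤ 1 / 2) :
    ‖z‖ ≤ ‖1 - z‖ := by
  rw [norm_def, norm_def]
  refine Real.sqrt_le_sqrt ?_
  simp only [normSq_apply, sub_re, sub_im, one_re, one_im]
  nlinarith

theorem Complex.one_le_norm_inv_sub_one {z : ℂ} (hz : z ≠ 0) (h : z.re ≤ 1 / 2) :
    1 ≤ ‖z⁻¹ - 1‖ := by
  have hquot : z⁻¹ - 1 = (1 - z) / z := by field_simp
  rw [hquot, norm_div, one_le_div (norm_pos_iff.2 hz)]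
  exact norm_le_norm_one_sub_of_re_le_half h

theorem Complex.neg_half_le_one_div_re_iff_one_le_norm_add_one {w : ℂ} (hw : w ≠ 0) :
    -(1 / 2 : ℝ) ≤ (1 / w).re ↔ 1 ≤ ‖w + 1‖ := by
  have hexpand : normSq (w + 1) = normSq w + 2 * w.re + 1 := by
    simp only [normSq_apply, add_re, add_im, one_re, one_im]
    ring
  rw [one_div w, inv_re, le_div_iff₀ (normSq_pos.2 hw), norm_def, Real.one_le_sqrt, hexpand]
  constructor <;> intro h <;> linarith

theorem hurwitzT_of_gnint_eq {z c : ℂ} (hz : z ≠ 0) (hdig : gnint (1 / z) = c) :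
    hurwitzT z = z⁻¹ - c := by
  rw [hurwitzT, if_neg hz, hdig, one_div]

/-- If the first Hurwitz digit of z ∈ K is 2, then T(z) does not satisfy |T(z)+1| < 1;
equivalently Re(1/T(z)) ≥ -1/2 whenever T(z) ≠ 0. -/
theorem digit_two_restriction {z : ℂ} (hz : z ∈ K) (hz0 : z ≠ 0)
    (hdig : gnint (1 / z) = 2) :
    ¬ ‖hurwitzT z + 1‖ < 1 ∧
      (hurwitzT z ≠ 0 → -(1/2 : ℝ) ≤ (1 / hurwitzT z).re) := by
  have hshift : hurwitzT z + 1 = z⁻¹ - 1 := by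
    rw [hurwitzT_of_gnint_eq hz0 hdig]
    ring
  have hnorm : 1 ≤ ‖hurwitzT z + 1‖ := hshift ▸ one_le_norm_inv_sub_one hz0 hz.1.2.le
  exact ⟨not_lt.2 hnorm,
    fun hT0 => (neg_half_le_one_div_re_iff_one_le_norm_add_one hT0).2 hnorm⟩
end
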